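/- Let P and P̃ be monic hyperbolic real polynomials of degree n with roots x₁ ≤ … ≤ xₙ and x̃₁ ≤ … ≤ x̃ₙ respectively (listed in increasing order with multiplicity). Suppose x_i ≤ x̃_i for all i. Then for every k with 1 ≤ k ≤ n−1 and every j with 1 ≤ j ≤ n−k, the j-th roots in increasing order (with multiplicity) ξ_j of P^{(k)} and ξ̃_j of P̃^{(k)} satisfy ξ_j ≤ ξ̃_j. -/

import Mathlib

/-!
Write `N_f(c)` for the number of roots of `f` in `(-∞, c]`, counted with multiplicity. For sorted
root tuples, `x ≤ y` pointwise iff `N_Q ≤ N_P` everywhere, so it suffices to show that this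
inequality passes from two hyperbolic polynomials of equal degree to their derivatives.

Rolle's theorem on `(-∞, c]` and on `(c, ∞)` shows that `N_{P'}(c)` is `N_P(c)` or
`N_P(c) - 1`. Comparing the signs of `P(c)` and `P'(c)`, both products of linear factors, shows
that, when `c` is a root of neither, it is `N_P(c) - 1` exactly when
`P'(c) / P(c) = ∑ 1 / (c - x_i)` is positive. If `N_Q(c) < N_P(c)`, then
`N_{Q'}(c) ≤ N_Q(c) ≤ N_P(c) - 1 ≤ N_{P'}(c)`. Otherwise every pair `x_i ≤ y_i` lies on one side
of `c`, so `∑ 1 / (c - x_i) ≤ ∑ 1 / (c - y_i)`, and the criterion concludes. Finally `N` is right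
continuous, which removes the restriction on `c`.
-/

open Polynomial Finset Filter Topology

theorem card_filter_le_card_filter_of_le {ι α : Type*} [Fintype ι] [Preorder α] [DecidableLE α]
    {x y : ι → α} (hxy : x ≤ y) (c : α) : #{i | y i ≤ c} ≤ #{i | x i ≤ c} :=
  card_le_card (monotone_filter_right _ fun i _ hi => (hxy i).trans hi)

theorem Monotone.le_of_card_filter_le {α : Type*} [Preorder α] [DecidableLE α] {m : ℕ}
    {x y : Fin m → α} (hx : Monotone x) (hy : Monotone y)
    (h : ∀ c, #{i | y i ≤ c} ≤ #{i | x i ≤ c}) : x ≤ y := fun j =>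
  (Tuple.lt_card_le_iff_apply_le_of_monotone hx).1 <|
    ((Tuple.lt_card_le_iff_apply_le_of_monotone hy).2 le_rfl).trans_le (h (y j))

namespace Multiset

theorem countP_map_univ {α ι : Type*} [Fintype ι] (x : ι → α) (p : α → Prop)
    [DecidablePred p] : (univ.val.map x).countP p = #{i | p (x i)} :=
  countP_map x _ p

theorem exists_monotone_fin_map_eq {α : Type*} [LinearOrder α] (s : Multiset α) {m : ℕ}
    (hm : card s = m) : ∃ x : Fin m → α, Monotone x ∧ univ.val.map x = s := by
  subst hm
  have hlen := length_sort (s := s) (· ≤ ·)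
  refine ⟨fun i => (s.sort (· ≤ ·)).get (i.cast hlen.symm), ?_, ?_⟩
  · exact (List.sortedLE_iff_pairwise.2 (pairwise_sort s _)).monotone_get.comp fun _ _ h => h
  · rw [Fin.univ_val_map, ← List.ofFn_congr hlen, List.ofFn_get, sort_eq]

theorem exists_le_of_countP_le {α : Type*} [LinearOrder α] {s t : Multiset α} {m : ℕ}
    (hs : card s = m) (ht : card t = m) (h : ∀ c, t.countP (· ≤ c) ≤ s.countP (· ≤ c)) :
    ∃ x y : Fin m → α, x ≤ y ∧ univ.val.map x = s ∧ univ.val.map y = t := by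
  obtain ⟨x, hx, rfl⟩ := s.exists_monotone_fin_map_eq hs
  obtain ⟨y, hy, rfl⟩ := t.exists_monotone_fin_map_eq ht
  exact ⟨x, y, hx.le_of_card_filter_le hy fun c => by
    simpa only [countP_map_univ] using h c, rfl, rfl⟩

theorem eventually_countP_le_eq_and_notMem {α : Type*} [LinearOrder α] [TopologicalSpace α]
    [OrderTopology α] (s : Multiset α) (c : α) :
    ∀ᶠ c' in 𝓝[>] c, s.countP (· ≤ c') = s.countP (· ≤ c) ∧ c' ∉ s := by
  have hgap : ∀ᶠ c' in 𝓝[>] c, ∀ r ∈ s.toFinset, c < r → c' < r :=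
    (eventually_all_finset _).2 fun r _ => by
      by_cases hcr : c < r
      · filter_upwards [Ioo_mem_nhdsGT hcr] with c' hc' using fun _ => hc'.2
      · exact Eventually.of_forall fun _ h => absurd h hcr
  filter_upwards [hgap, self_mem_nhdsWithin] with c' hgap (hcc' : c < c')
  refine ⟨countP_congr rfl fun r hr => propext ⟨fun hrc' => ?_, fun hrc => hrc.trans hcc'.le⟩,
    fun hc's => (hgap c' (mem_toFinset.2 hc's) hcc').false⟩
  by_contra hrc
  exact (hgap r (mem_toFinset.2 hr) (not_le.1 hrc)).not_ge hrc'

theorem neg_one_pow_countP_mul_prod_sub_pos {R : Type*} [CommRing R] [LinearOrder R]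
    [IsStrictOrderedRing R] {s : Multiset R} {c : R} (hc : c ∉ s) :
    0 < (-1) ^ s.countP (c < ·) * (s.map (c - ·)).prod := by
  induction s using Multiset.induction_on with
  | empty => simp
  | cons a s ih =>
    rw [mem_cons, not_or] at hc
    have hs := ih hc.2
    rw [countP_cons, map_cons, prod_cons]
    rcases lt_or_gt_of_ne hc.1 with hca | hac
    · simp only [hca, if_true, pow_succ]
      nlinarith [sub_pos.2 hca]
    · simp only [hac.not_gt, if_false, add_zero]
      nlinarith [sub_pos.2 hac]

end Multiset

theorem one_div_sub_le_one_div_sub {K : Type*} [Field K] [LinearOrder K] [IsStrictOrderedRing K]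
    {a b c : K} (hab : a ≤ b) (hb : b ≠ c) (hside : a ≤ c ↔ b ≤ c) :
    1 / (c - a) ≤ 1 / (c - b) := by
  by_cases hbc : b ≤ c
  · exact one_div_le_one_div_of_le (sub_pos.2 (lt_of_le_of_ne hbc hb)) (sub_le_sub_left hab c)
  · have hca : c < a := not_le.1 (mt hside.1 hbc)
    exact one_div_le_one_div_of_neg_of_le (sub_neg.2 hca) (sub_le_sub_left hab c)

namespace Polynomial

theorem roots_prod_X_sub_C_univ {R ι : Type*} [CommRing R] [IsDomain R] [Fintype ι]
    (z : ι → R) : (∏ i, (X - C (z i))).roots = univ.val.map z := by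
  have : ∏ i, (X - C (z i)) = ((univ.val.map z).map fun a => X - C a).prod := by
    rw [Multiset.map_map]; rfl
  rw [this, roots_multiset_prod_X_sub_C]

theorem natDegree_iterate_derivative_eq {R : Type*} [Semiring R] [IsAddTorsionFree R]
    (p : R[X]) (k : ℕ) : (derivative^[k] p).natDegree = p.natDegree - k := by
  induction k with
  | zero => rfl
  | succ k ih => rw [Function.iterate_succ_apply', natDegree_derivative, ih, Nat.sub_sub]

theorem countP_mem_roots_le_countP_mem_roots_derivative_add_one (p : ℝ[X]) (s : Set ℝ)
    [s.OrdConnected] [DecidablePred (· ∈ s)] :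
    p.roots.countP (· ∈ s) ≤ p.derivative.roots.countP (· ∈ s) + 1 := by
  rcases eq_or_ne (derivative p) 0 with hp' | hp'
  · rw [eq_C_of_derivative_eq_zero hp']
    simp
  have hp : p ≠ 0 := ne_of_apply_ne derivative (by rwa [derivative_zero])
  set A := p.roots.filter (· ∈ s)
  set B := p.derivative.roots.filter (· ∈ s)
  have hcount : ∀ a ∈ A.toFinset, A.count a ≤ B.count a + 1 := fun a ha => by
    have has : a ∈ s := (Multiset.mem_filter.1 (Multiset.mem_toFinset.1 ha)).2
    rw [Multiset.count_filter_of_pos has, Multiset.count_filter_of_pos has, count_roots,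
      count_roots]
    have := rootMultiplicity_sub_one_le_derivative_rootMultiplicity p a
    omega
  have hrolle : A.toFinset.card ≤ (B.toFinset \ A.toFinset).card + 1 := by
    refine Finset.card_le_sdiff_of_interleaved fun a ha b hb hab hab' => ?_
    simp only [A, Multiset.mem_toFinset, Multiset.mem_filter, mem_roots hp] at ha hb
    obtain ⟨z, hz, hz'⟩ := exists_deriv_eq_zero hab p.continuousOn (ha.1.trans hb.1.symm)
    refine ⟨z, ?_, hz⟩
    simp only [B, Multiset.mem_toFinset, Multiset.mem_filter, mem_roots hp', IsRoot, ← p.deriv]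
    exact ⟨hz', Set.OrdConnected.out' ha.2 hb.2 (Set.Ioo_subset_Icc_self hz)⟩
  rw [Multiset.countP_eq_card_filter, Multiset.countP_eq_card_filter]
  calc A.card = ∑ a ∈ A.toFinset, A.count a := (Multiset.toFinset_sum_count_eq A).symm
    _ ≤ ∑ a ∈ A.toFinset, B.count a + (B.toFinset \ A.toFinset).card + 1 := by
      grw [Finset.sum_le_sum hcount, Finset.sum_add_distrib, ← Finset.card_eq_sum_ones, hrolle,
        add_assoc]
    _ ≤ ∑ a ∈ A.toFinset, B.count a + ∑ a ∈ B.toFinset \ A.toFinset, B.count a + 1 := by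
      grw [Finset.card_eq_sum_ones]
      gcongr with a ha
      exact Multiset.one_le_count_iff_mem.2 (Multiset.mem_toFinset.1 (Finset.mem_sdiff.1 ha).1)
    _ = ∑ a ∈ A.toFinset ∪ B.toFinset, B.count a + 1 := by
      rw [← Finset.sum_union Finset.disjoint_sdiff, Finset.union_sdiff_self_eq_union]
    _ = B.card + 1 := by
      rw [Multiset.sum_count_eq_card fun a ha =>
        Finset.mem_union_right _ (Multiset.mem_toFinset.2 ha)]

theorem countP_roots_le_countP_roots_derivative_add_one (p : ℝ[X]) (c : ℝ) :
    p.roots.countP (· ≤ c) ≤ p.derivative.roots.countP (· ≤ c) + 1 :=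
  countP_mem_roots_le_countP_mem_roots_derivative_add_one p (Set.Iic c)

theorem Splits.derivative {f : ℝ[X]} (hf : f.Splits) : f.derivative.Splits := by
  rw [splits_iff_card_roots] at hf ⊢
  have := card_roots_le_derivative f
  have := card_roots' f.derivative
  rw [natDegree_derivative] at *
  omega

theorem Splits.countP_roots_derivative_le {f : ℝ[X]} (hf : f.Splits) (c : ℝ) :
    f.derivative.roots.countP (· ≤ c) ≤ f.roots.countP (· ≤ c) := by
  have hgt := countP_mem_roots_le_countP_mem_roots_derivative_add_one f (Set.Ioi c)
  have hf' := hf.derivative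
  rw [splits_iff_card_roots] at hf hf'
  have h := Multiset.card_eq_countP_add_countP (· ≤ c) f.roots
  have h' := Multiset.card_eq_countP_add_countP (· ≤ c) f.derivative.roots
  simp only [not_le] at h h'
  simp only [Set.mem_Ioi] at hgt
  rw [natDegree_derivative] at hf'
  omega

theorem Splits.neg_one_pow_countP_mul_leadingCoeff_mul_eval_pos {f : ℝ[X]} (hf : f.Splits)
    {c : ℝ} (hc : f.eval c ≠ 0) :
    0 < (-1) ^ f.roots.countP (c < ·) * f.leadingCoeff * f.eval c := by
  have hf0 : f ≠ 0 := by rintro rfl; simp at hc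
  have hroot : c ∉ f.roots := fun h => hc ((mem_roots hf0).1 h)
  calc 0 < f.leadingCoeff ^ 2 * ((-1) ^ f.roots.countP (c < ·) * (f.roots.map (c - ·)).prod) :=
        mul_pos (pow_two_pos_of_ne_zero (leadingCoeff_ne_zero.2 hf0))
          (Multiset.neg_one_pow_countP_mul_prod_sub_pos hroot)
    _ = _ := by rw [hf.eval_eq_prod_roots]; ring

theorem Splits.eval_derivative_mul_eval_pos_iff {f : ℝ[X]} (hf : f.Splits) {c : ℝ}
    (hc : f.eval c ≠ 0) (hc' : f.derivative.eval c ≠ 0) :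
    0 < f.derivative.eval c * f.eval c ↔
      Even (f.roots.countP (c < ·) + f.derivative.roots.countP (c < ·)) := by
  have hd : 0 < (f.natDegree : ℝ) := by
    have : f.natDegree ≠ 0 := derivative_ne_zero.1 (by rintro h; simp [h] at hc')
    positivity
  have hlc : f.leadingCoeff ≠ 0 := leadingCoeff_ne_zero.2 (by rintro rfl; simp at hc)
  have hsign := mul_pos (hf.neg_one_pow_countP_mul_leadingCoeff_mul_eval_pos hc)
    (hf.derivative.neg_one_pow_countP_mul_leadingCoeff_mul_eval_pos hc')
  rw [leadingCoeff_derivative] at hsign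
  have key : 0 < (-1) ^ (f.roots.countP (c < ·) + f.derivative.roots.countP (c < ·)) *
      (f.derivative.eval c * f.eval c) := by
    refine pos_of_mul_pos_right (a := f.leadingCoeff ^ 2 * f.natDegree) ?_ (by positivity)
    convert hsign using 1
    ring
  rcases Nat.even_or_odd (f.roots.countP (c < ·) + f.derivative.roots.countP (c < ·)) with
    he | ho
  · rw [he.neg_one_pow, one_mul] at key
    exact iff_of_true key he
  · rw [ho.neg_one_pow, neg_one_mul, neg_pos] at key
    exact iff_of_false (lt_asymm key) (Nat.not_even_iff_odd.2 ho)

theorem Splits.countP_roots_derivative_add_one_eq_iff {f : ℝ[X]} (hf : f.Splits) {c : ℝ}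
    (hc : f.eval c ≠ 0) (hc' : f.derivative.eval c ≠ 0) :
    f.derivative.roots.countP (· ≤ c) + 1 = f.roots.countP (· ≤ c) ↔
      0 < (f.roots.map fun r => 1 / (c - r)).sum := by
  rw [← hf.eval_derivative_div_eval_of_ne_zero hc, div_pos_iff, ← mul_pos_iff,
    hf.eval_derivative_mul_eval_pos_iff hc hc', Nat.even_iff]
  have hd : f.natDegree ≠ 0 := derivative_ne_zero.1 (by rintro h; simp [h] at hc')
  have hle := countP_roots_le_countP_roots_derivative_add_one f c
  have hge := hf.countP_roots_derivative_le c
  have h := Multiset.card_eq_countP_add_countP (· ≤ c) f.roots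
  have h' := Multiset.card_eq_countP_add_countP (· ≤ c) f.derivative.roots
  simp only [not_le] at h h'
  rw [splits_iff_card_roots.1 hf] at h
  rw [splits_iff_card_roots.1 hf.derivative, natDegree_derivative] at h'
  omega

theorem Splits.countP_roots_derivative_le_of_le_of_eval_ne_zero {ι : Type*} [Fintype ι]
    {f g : ℝ[X]} (hf : f.Splits) (hg : g.Splits) {x y : ι → ℝ} (hxy : x ≤ y)
    (hfx : f.roots = univ.val.map x) (hgy : g.roots = univ.val.map y) {c : ℝ}
    (hfc : f.eval c ≠ 0) (hgc : g.eval c ≠ 0) (hfc' : f.derivative.eval c ≠ 0)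
    (hgc' : g.derivative.eval c ≠ 0) :
    g.derivative.roots.countP (· ≤ c) ≤ f.derivative.roots.countP (· ≤ c) := by
  have hcount {h : ℝ[X]} {z : ι → ℝ} (hz : h.roots = univ.val.map z) :
      h.roots.countP (· ≤ c) = #{i | z i ≤ c} := by
    rw [hz, Multiset.countP_map_univ]
  have hf₁ := countP_roots_le_countP_roots_derivative_add_one f c
  have hg₁ := hg.countP_roots_derivative_le c
  rw [hcount hfx] at hf₁
  rw [hcount hgy] at hg₁
  have hsub : ({i | y i ≤ c} : Finset ι) ⊆ ({i | x i ≤ c} : Finset ι) :=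
    monotone_filter_right _ fun i _ hi => (hxy i).trans hi
  rcases hsub.eq_or_ssubset with hside | hlt
  swap
  · have := card_lt_card hlt
    omega
  have hsum :
      (f.roots.map fun r => 1 / (c - r)).sum ≤ (g.roots.map fun r => 1 / (c - r)).sum := by
    rw [hfx, hgy, Multiset.map_map, Multiset.map_map]
    refine Multiset.sum_map_le_sum_map _ _ fun i _ => one_div_sub_le_one_div_sub (hxy i)
      (fun hi => hgc (hi ▸ (mem_roots'.1 (hgy ▸ Multiset.mem_map_of_mem y (mem_univ i))).2)) ?_
    simp only [Finset.ext_iff, mem_filter, mem_univ, true_and] at hside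
    exact (hside i).symm
  have hf₂ := hf.countP_roots_derivative_le c
  rw [hcount hfx] at hf₂
  have hcard := congrArg card hside
  by_contra! hlt
  have hf' := (hf.countP_roots_derivative_add_one_eq_iff hfc hfc').1 (by rw [hcount hfx]; omega)
  have hg' := (hg.countP_roots_derivative_add_one_eq_iff hgc hgc').2 (hf'.trans_le hsum)
  rw [hcount hgy] at hg'
  omega

theorem Splits.countP_roots_derivative_le_of_countP_roots_le {f g : ℝ[X]} (hf : f.Splits)
    (hg : g.Splits) (hdeg : f.natDegree = g.natDegree)
    (hdom : ∀ c, g.roots.countP (· ≤ c) ≤ f.roots.countP (· ≤ c)) (c : ℝ) :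
    g.derivative.roots.countP (· ≤ c) ≤ f.derivative.roots.countP (· ≤ c) := by
  rcases eq_or_ne f.natDegree 0 with hd | hd
  · simp [derivative_of_natDegree_zero hd, derivative_of_natDegree_zero (hdeg ▸ hd)]
  have hd' : g.natDegree ≠ 0 := hdeg ▸ hd
  obtain ⟨x, y, hxy, hfx, hgy⟩ := Multiset.exists_le_of_countP_le
    ((splits_iff_card_roots.1 hf).trans hdeg) (splits_iff_card_roots.1 hg) hdom
  have hev {h : ℝ[X]} (hh : h ≠ 0) : ∀ᶠ c' in 𝓝[>] c, h.eval c' ≠ 0 :=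
    (h.roots.eventually_countP_le_eq_and_notMem c).mono fun _ hc' hroot =>
      hc'.2 ((mem_roots hh).2 hroot)
  -- move `c` slightly to the right, off the roots of `f`, `g`, `f'`, `g'`, keeping both counts
  obtain ⟨c', ⟨hf', -⟩, ⟨hg', -⟩, hfc, hgc, hfc', hgc'⟩ :=
    ((f.derivative.roots.eventually_countP_le_eq_and_notMem c).and
    ((g.derivative.roots.eventually_countP_le_eq_and_notMem c).and
    ((hev (ne_zero_of_natDegree_gt (Nat.pos_of_ne_zero hd))).and
    ((hev (ne_zero_of_natDegree_gt (Nat.pos_of_ne_zero hd'))).and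
    ((hev (derivative_ne_zero.2 hd)).and (hev (derivative_ne_zero.2 hd'))))))).exists
  rw [← hf', ← hg']
  exact hf.countP_roots_derivative_le_of_le_of_eval_ne_zero hg hxy hfx.symm hgy.symm hfc hgc
    hfc' hgc'

theorem Splits.countP_roots_iterate_derivative_le_of_countP_roots_le {f g : ℝ[X]}
    (hf : f.Splits) (hg : g.Splits) (hdeg : f.natDegree = g.natDegree)
    (hdom : ∀ c, g.roots.countP (· ≤ c) ≤ f.roots.countP (· ≤ c)) (k : ℕ) (c : ℝ) :
    (Polynomial.derivative^[k] g).roots.countP (· ≤ c) ≤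
      (Polynomial.derivative^[k] f).roots.countP (· ≤ c) := by
  induction k generalizing f g with
  | zero => exact hdom c
  | succ k ih =>
    exact ih hf.derivative hg.derivative (by simp [hdeg])
      (hf.countP_roots_derivative_le_of_countP_roots_le hg hdeg hdom)

end Polynomial

theorem roots_of_derivative_monotone_in_roots_general
    (n : ℕ) (x y : Fin n → ℝ)
    (P Q : Polynomial ℝ)
    (hP : P = ∏ i, (X - C (x i))) (hQ : Q = ∏ i, (X - C (y i)))
    (hle : ∀ i, x i ≤ y i) :
    ∀ k : ℕ, 1 ≤ k → k ≤ n - 1 →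
      ∀ ξ η : Fin (n - k) → ℝ, Monotone ξ → Monotone η →
        Polynomial.derivative^[k] P =
          C ((Polynomial.derivative^[k] P).leadingCoeff) * ∏ i, (X - C (ξ i)) →
        Polynomial.derivative^[k] Q =
          C ((Polynomial.derivative^[k] Q).leadingCoeff) * ∏ i, (X - C (η i)) →
        ∀ j : Fin (n - k), ξ j ≤ η j := by
  intro k _ _ ξ η hξ hη hPξ hQη j
  subst hP hQ
  have hsplits (z : Fin n → ℝ) : (∏ i, (X - C (z i))).Splits :=
    Splits.prod fun i _ => Splits.X_sub_C (z i)
  have hdeg (z : Fin n → ℝ) : (∏ i, (X - C (z i))).natDegree = n := by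
    rw [← splits_iff_card_roots.1 (hsplits z), roots_prod_X_sub_C_univ, Multiset.card_map,
      card_val, card_univ, Fintype.card_fin]
  have hlc (z : Fin n → ℝ) : (derivative^[k] (∏ i, (X - C (z i)))).leadingCoeff ≠ 0 := by
    refine leadingCoeff_ne_zero.2 (ne_zero_of_natDegree_gt (n := 0) ?_)
    rw [natDegree_iterate_derivative_eq, hdeg]
    have := j.pos
    omega
  have hdom := Splits.countP_roots_iterate_derivative_le_of_countP_roots_le (hsplits x)
    (hsplits y) (by rw [hdeg, hdeg]) (fun c => by
      simpa only [roots_prod_X_sub_C_univ, Multiset.countP_map_univ] using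
        card_filter_le_card_filter_of_le hle c) k
  rw [hPξ, hQη, roots_C_mul _ (hlc x), roots_C_mul _ (hlc y), roots_prod_X_sub_C_univ,
    roots_prod_X_sub_C_univ] at hdom
  exact hξ.le_of_card_filter_le hη
    (fun c => by simpa only [Multiset.countP_map_univ] using hdom c) j

/-- Weak monotone dependence of the roots of `P^{(k)}` on the roots of `P`:
if `P` and `Q` are monic hyperbolic real polynomials of degree `n` with roots
`x 0 ≤ … ≤ x (n-1)` and `y 0 ≤ … ≤ y (n-1)` (listed in increasing order with
multiplicity) satisfying `x i ≤ y i` for all `i`, then for every `1 ≤ k ≤ n - 1`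
the increasingly ordered (with multiplicity) roots `ξ` of `P^{(k)}` and `η` of
`Q^{(k)}` satisfy `ξ j ≤ η j` for all `j`. -/
theorem roots_of_derivative_monotone_in_roots
    (n : ℕ) (x y : Fin n → ℝ) (hx : Monotone x) (hy : Monotone y)
    (P Q : Polynomial ℝ)
    (hP : P = ∏ i, (X - C (x i))) (hQ : Q = ∏ i, (X - C (y i)))
    (hle : ∀ i, x i ≤ y i) :
    ∀ k : ℕ, 1 ≤ k → k ≤ n - 1 →
      ∀ ξ η : Fin (n - k) → ℝ, Monotone ξ → Monotone η →
        Polynomial.derivative^[k] P =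
          C ((Polynomial.derivative^[k] P).leadingCoeff) * ∏ i, (X - C (ξ i)) →
        Polynomial.derivative^[k] Q =
          C ((Polynomial.derivative^[k] Q).leadingCoeff) * ∏ i, (X - C (η i)) →
        ∀ j : Fin (n - k), ξ j ≤ η j :=
  roots_of_derivative_monotone_in_roots_general n x y P Q hP hQ hle
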